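/- For a regular Hausdorff space X, the following are equivalent: (1) X is extremally disconnected; (2) if A ⊆ X is a dense subset and Y is a compact Hausdorff space, then each continuous map g : A → Y can be extended to a continuous map f : X → Y. -/
import Mathlib

open Filter Set Topology

/-- Key lemma: in an extremally disconnected space, a continuous map from a dense
subset into a compact Hausdorff space converges along the comap filter at every point. -/
lemma key_tendsto {X : Type*} [TopologicalSpace X] [ExtremallyDisconnected X]
    {A : Set X} (hA : Dense A) {Y : Type*} [TopologicalSpace Y] [CompactSpace Y] [T2Space Y]
    {g : A → Y} (hg : Continuous g) (x : X) :
    ∃ c, Tendsto g (Filter.comap Subtype.val (𝓝 x)) (𝓝 c) := by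
  set F : Filter A := Filter.comap Subtype.val (𝓝 x) with hF
  have di : IsDenseInducing (Subtype.val : A → X) := hA.isDenseEmbedding_val.toIsDenseInducing
  haveI hFne : F.NeBot := di.comap_nhds_neBot x
  obtain ⟨U, hU⟩ := Filter.exists_ultrafilter_le (Filter.map g F)
  have hUc : (U : Filter Y) ≤ 𝓝 U.lim := U.le_nhds_lim
  refine ⟨U.lim, ?_⟩
  rw [(closed_nhds_basis U.lim).tendsto_right_iff]
  rintro W ⟨hWn, hWc⟩
  have hVU : interior W ∈ U := hUc (interior_mem_nhds.2 hWn)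
  set s : Set A := g ⁻¹' interior W with hs
  have hsopen : IsOpen s := isOpen_interior.preimage hg
  obtain ⟨O, hO, hOs⟩ := isOpen_induced_iff.1 hsopen
  have himg : Subtype.val '' s = O ∩ A := by
    rw [← hOs]; ext y
    simp only [Set.mem_image, Set.mem_inter_iff]
    constructor
    · rintro ⟨a, ha, rfl⟩; exact ⟨ha, a.2⟩
    · rintro ⟨hO', hA'⟩; exact ⟨⟨y, hA'⟩, hO', rfl⟩
  have hclos : closure (Subtype.val '' s) = closure O := by
    rw [himg]
    refine subset_antisymm (closure_mono inter_subset_left) ?_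
    refine closure_minimal (fun y hy => ?_) isClosed_closure
    have h' : y ∈ closure A ∩ O := ⟨hA y, hy⟩
    have := hO.closure_inter (s := A) h'
    exact closure_mono (Set.inter_comm A O ▸ subset_rfl) this
  have hTopen : IsOpen (closure (Subtype.val '' s)) := by
    rw [hclos]; exact ExtremallyDisconnected.open_closure O hO
  have hxT : x ∈ closure (Subtype.val '' s) := by
    rw [mem_closure_iff_clusterPt]
    have h1 : (F ⊓ 𝓟 s).NeBot := by
      rw [Filter.inf_principal_neBot_iff]
      intro t ht
      have hgt : g '' t ∈ Filter.map g F :=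
        Filter.mem_map.2 (Filter.mem_of_superset ht (Set.subset_preimage_image g t))
      obtain ⟨y, hy1, hy2⟩ := U.nonempty_of_mem (Filter.inter_mem (hU hgt) hVU)
      obtain ⟨a, hat, rfl⟩ := hy1
      exact ⟨a, hat, hy2⟩
    have hle : Filter.map Subtype.val (F ⊓ 𝓟 s) ≤ 𝓝 x ⊓ 𝓟 (Subtype.val '' s) := by
      refine le_inf ?_ ?_
      · exact (Filter.map_mono inf_le_left).trans (by rw [hF]; exact Filter.map_comap_le)
      · exact (Filter.map_mono inf_le_right).trans (by simp [Filter.map_principal])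
    exact Filter.neBot_of_le hle
  have hT : (Subtype.val ⁻¹' closure (Subtype.val '' s) : Set A) ∈ F :=
    Filter.preimage_mem_comap (hTopen.mem_nhds hxT)
  refine Filter.mem_of_superset hT fun a ha => ?_
  have h1 : a ∈ closure s := closure_subtype.2 ha
  have h2 : g a ∈ closure (g '' s) :=
    (image_closure_subset_closure_image hg) (Set.mem_image_of_mem g h1)
  have h3 : closure (g '' s) ⊆ W := by
    refine (closure_mono ?_).trans (hWc.closure_subset_iff.2 interior_subset)
    exact Set.image_preimage_subset g (interior W)
  exact h3 h2

/-- A regular Hausdorff space is extremally disconnected iff every continuous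
map from a dense subset into a compact Hausdorff space extends continuously. -/
theorem extremallyDisconnected_iff_dense_extension.{u}
    {X : Type*} [TopologicalSpace X] [T2Space X] [RegularSpace X] :
    ExtremallyDisconnected X ↔
      ∀ A : Set X, Dense A →
        ∀ (Y : Type u) [TopologicalSpace Y] [CompactSpace Y] [T2Space Y],
          ∀ g : A → Y, Continuous g →
            ∃ f : X → Y, Continuous f ∧ ∀ a : A, f a = g a := by
  constructor
  · intro hED A hA Y _ _ _ g hg
    have di : IsDenseInducing (Subtype.val : A → X) := hA.isDenseEmbedding_val.toIsDenseInducing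
    have htend := fun x => key_tendsto hA hg x
    exact ⟨di.extend g, di.continuous_extend htend, fun a => di.extend_eq hg a⟩
  · intro h
    constructor
    intro U hU
    classical
    -- A = U ∪ (closure U)ᶜ is open dense
    set A : Set X := U ∪ (closure U)ᶜ with hAdef
    have hAdense : Dense A := by
      intro x
      rw [mem_closure_iff]
      intro V hV hxV
      by_cases hmeets : (V ∩ U).Nonempty
      · obtain ⟨y, hy1, hy2⟩ := hmeets
        exact ⟨y, hy1, Or.inl hy2⟩
      · refine ⟨x, hxV, Or.inr fun hxc => ?_⟩
        rw [mem_closure_iff] at hxc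
        obtain ⟨y, hy1, hy2⟩ := hxc V hV hxV
        exact hmeets ⟨y, hy1, hy2⟩
    -- the two-point discrete space in universe u
    let g : A → ULift.{u} Bool := fun a => ULift.up (decide (↑a ∈ U))
    have hgU : ∀ a : A, g a = ULift.up true ↔ ↑a ∈ U := by
      intro a
      simp only [g, ULift.up_inj, decide_eq_true_eq]
    have hg : Continuous g := by
      have : IsLocallyConstant g := by
        rw [IsLocallyConstant.iff_isOpen_fiber]
        intro y
        rcases y with ⟨b⟩
        cases b with
        | true =>
          have he : g ⁻¹' {ULift.up true} = (Subtype.val ⁻¹' U : Set A) := by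
            ext a
            simpa only [Set.mem_preimage, Set.mem_singleton_iff] using hgU a
          rw [he]
          exact hU.preimage continuous_subtype_val
        | false =>
          have he : g ⁻¹' {ULift.up false} = (Subtype.val ⁻¹' (closure U)ᶜ : Set A) := by
            ext a
            simp only [g, Set.mem_preimage, Set.mem_singleton_iff, ULift.up_inj,
              decide_eq_false_iff_not, Set.mem_compl_iff]
            constructor
            · intro ha hc
              rcases a.2 with h1 | h1
              · exact ha h1
              · exact h1 hc
            · intro ha hc
              exact ha (subset_closure hc)
          rw [he]
          exact (isClosed_closure.isOpen_compl).preimage continuous_subtype_val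
      exact this.continuous
    obtain ⟨f, hf, hfg⟩ := h A hAdense (ULift.{u} Bool) g hg
    have key : closure U = f ⁻¹' {ULift.up true} := by
      apply subset_antisymm
      · refine closure_minimal ?_ (IsClosed.preimage hf (isClosed_discrete _))
        intro x hx
        have hxA : x ∈ A := Or.inl hx
        have h1 := hfg ⟨x, hxA⟩
        simp only [Set.mem_preimage, Set.mem_singleton_iff]
        rw [h1]
        exact (hgU ⟨x, hxA⟩).2 hx
      · intro x hx
        by_contra hc
        have hxA : x ∈ A := Or.inr hc
        have h1 := hfg ⟨x, hxA⟩
        simp only [Set.mem_preimage, Set.mem_singleton_iff] at hx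
        rw [hx] at h1
        have hnu : x ∉ U := fun hh => hc (subset_closure hh)
        exact hnu ((hgU ⟨x, hxA⟩).1 h1.symm)
    rw [key]
    exact (isOpen_discrete _).preimage hf
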